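/- arXiv:1608.03628 — 3 statements merged into one kernel-verified Lean document; each statement's English description precedes it below -/
import Mathlib

section
/- For all indices j, k in {1,…,n}, the time coupled diffusion distance satisfies D(j,k) = ‖e_jᵀΨ − e_kᵀΨ‖₂, where ‖·‖₂ is the Euclidean norm on ℝⁿ; that is, the time coupled diffusion map x_j ↦ e_jᵀΨ is an embedding into Euclidean space that exactly preserves the time coupled diffusion distance. -/
open Matrix Finset

/-!
Scaling the columns of `P` by `π^{-1/2}` turns the weighted distance `D(j,k)` into the Euclidean
distance between rows `j` and `k` of `Q = P Π^{-1/2}`. The SVD gives `Π^{1/2} Q = U Σ Vᵀ`, i.e.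
`Q = Ψ Vᵀ`; since `V` is orthogonal, `Q Qᵀ = Ψ Ψᵀ`, and Euclidean distances between rows depend
only on this Gram matrix.
-/

namespace Matrix

variable {m n p R : Type*} [Fintype n] [Fintype p] [CommRing R]

theorem mul_transpose_mul_mul_transpose_of_orthogonal [DecidableEq n] {B : Matrix m n R} {V : Matrix p n R}
    (hV : Vᵀ * V = 1) : B * Vᵀ * (B * Vᵀ)ᵀ = B * Bᵀ := by
  rw [transpose_mul, transpose_transpose, Matrix.mul_assoc, ← Matrix.mul_assoc Vᵀ, hV,
    Matrix.one_mul]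

theorem sum_sq_sub_row_eq_gram (M : Matrix m n R) (j k : m) :
    ∑ r, (M j r - M k r) ^ 2 = (M * Mᵀ) j j - 2 * (M * Mᵀ) j k + (M * Mᵀ) k k := by
  simp only [mul_apply, transpose_apply, Finset.mul_sum, ← Finset.sum_sub_distrib,
    ← Finset.sum_add_distrib]
  exact Finset.sum_congr rfl fun r _ => by ring

theorem sum_sq_sub_row_eq_of_mul_transpose_eq {M : Matrix m n R} {N : Matrix m p R}
    (h : M * Mᵀ = N * Nᵀ) (j k : m) :
    ∑ r, (M j r - M k r) ^ 2 = ∑ r, (N j r - N k r) ^ 2 := by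
  rw [sum_sq_sub_row_eq_gram, sum_sq_sub_row_eq_gram, h]

theorem sum_sq_sub_row_div_eq_mul_diagonal_inv_sqrt [DecidableEq n] {π : n → ℝ} (hπ : ∀ r, 0 ≤ π r)
    (P : Matrix m n ℝ) (j k : m) :
    ∑ r, (P j r - P k r) ^ 2 / π r =
      ∑ r, ((P * diagonal fun r => (√(π r))⁻¹) j r -
        (P * diagonal fun r => (√(π r))⁻¹) k r) ^ 2 := by
  refine Finset.sum_congr rfl fun r _ => ?_
  rw [mul_diagonal, mul_diagonal, ← sub_mul, mul_pow, inv_pow, Real.sq_sqrt (hπ r), div_eq_mul_inv]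

end Matrix

theorem time_coupled_diffusion_map_preserves_distance_general
    (n : ℕ)
    (P : Matrix (Fin n) (Fin n) ℝ)
    (π : Fin n → ℝ)
    (hπ_pos : ∀ i, 0 < π i)
    (U V : Matrix (Fin n) (Fin n) ℝ)
    (σ : Fin n → ℝ)
    (hV : V * Vᵀ = 1 ∧ Vᵀ * V = 1)
    (hSVD : Matrix.diagonal (fun i => Real.sqrt (π i)) * P *
        Matrix.diagonal (fun i => (Real.sqrt (π i))⁻¹) = U * Matrix.diagonal σ * Vᵀ)
    (Ψ : Matrix (Fin n) (Fin n) ℝ)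
    (hΨ : Ψ = Matrix.diagonal (fun i => (Real.sqrt (π i))⁻¹) * U * Matrix.diagonal σ) :
    ∀ j k : Fin n,
      Real.sqrt (∑ r, (P j r - P k r) ^ 2 / π r) =
        Real.sqrt (∑ r, (Ψ j r - Ψ k r) ^ 2) := by
  intro j k
  have hinv : (diagonal fun i => (√(π i))⁻¹) * diagonal (fun i => √(π i)) = 1 := by
    rw [diagonal_mul_diagonal, ← diagonal_one]
    exact congrArg diagonal (funext fun i => inv_mul_cancel₀ (Real.sqrt_pos.2 (hπ_pos i)).ne')
  have hQ : P * (diagonal fun i => (√(π i))⁻¹) = Ψ * Vᵀ := by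
    calc P * (diagonal fun i => (√(π i))⁻¹)
        = (diagonal fun i => (√(π i))⁻¹) *
            (diagonal (fun i => √(π i)) * P * diagonal fun i => (√(π i))⁻¹) := by
          rw [Matrix.mul_assoc, ← Matrix.mul_assoc _ (diagonal _), hinv, Matrix.one_mul]
      _ = Ψ * Vᵀ := by rw [hSVD, hΨ]; simp only [Matrix.mul_assoc]
  rw [sum_sq_sub_row_div_eq_mul_diagonal_inv_sqrt (fun r => (hπ_pos r).le), hQ,
    sum_sq_sub_row_eq_of_mul_transpose_eq (mul_transpose_mul_mul_transpose_of_orthogonal hV.2)]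

/-- The time coupled diffusion map `x_j ↦ e_jᵀ Ψ` exactly preserves the
time coupled diffusion distance `D(j,k) = ‖e_jᵀP − e_kᵀP‖_{L²(1/π)}`. -/
theorem time_coupled_diffusion_map_preserves_distance
    (n : ℕ) (hn : 1 ≤ n)
    (P : Matrix (Fin n) (Fin n) ℝ)
    (hP_nonneg : ∀ i j, 0 ≤ P i j)
    (hP_row : ∀ i, ∑ j, P i j = 1)
    (π : Fin n → ℝ)
    (hπ_pos : ∀ i, 0 < π i)
    (hπ_stat : ∀ j, ∑ i, π i * P i j = π j)
    (U V : Matrix (Fin n) (Fin n) ℝ)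
    (σ : Fin n → ℝ)
    (hU : U * Uᵀ = 1 ∧ Uᵀ * U = 1)
    (hV : V * Vᵀ = 1 ∧ Vᵀ * V = 1)
    (hσ_nonneg : ∀ i, 0 ≤ σ i)
    (hσ_anti : ∀ i j : Fin n, i ≤ j → σ j ≤ σ i)
    (hSVD : Matrix.diagonal (fun i => Real.sqrt (π i)) * P *
        Matrix.diagonal (fun i => (Real.sqrt (π i))⁻¹) = U * Matrix.diagonal σ * Vᵀ)
    (Ψ : Matrix (Fin n) (Fin n) ℝ)
    (hΨ : Ψ = Matrix.diagonal (fun i => (Real.sqrt (π i))⁻¹) * U * Matrix.diagonal σ) :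
    ∀ j k : Fin n,
      Real.sqrt (∑ r, (P j r - P k r) ^ 2 / π r) =
        Real.sqrt (∑ r, (Ψ j r - Ψ k r) ^ 2) :=
  time_coupled_diffusion_map_preserves_distance_general n P π hπ_pos U V σ hV hSVD Ψ hΨ
end

section
/- Let E be a real Banach space, σ ∈ ℝ, ε > 0, M ≥ 0, C ≥ 0. Let A : ℝ → (E →L E) be a family of continuous linear endomorphisms, continuous in operator norm on [σ, σ+ε], with ‖A(τ)‖ ≤ M and ‖A(τ) − A(σ)‖ ≤ C (τ − σ) for all τ ∈ [σ, σ+ε]. Let u : ℝ → E be differentiable on [σ, σ+ε] with u′(τ) = A(τ)(u(τ)) for all τ ∈ [σ, σ+ε]. Then ‖u(σ+ε) − u(σ) − ε · A(σ)(u(σ))‖ ≤ (C + M²) · exp(M ε) · ε² · ‖u(σ)‖. (This is the short-time first-order expansion: the evolution over [σ, σ+ε] equals I + ε A(σ) up to an error of order ε².) -/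
/-!
By Grönwall, `‖u t‖ ≤ exp (M (t - a)) ‖u a‖` on `[a, b]`, and then the mean value inequality gives
`‖u t - u a‖ = O(t - a)`. The remainder `g t = u t - u a - (t - a) • A a (u a)` has derivative
`(A t - A a) (u t) + A a (u t - u a)`, which is `O(t - a)` by the Lipschitz bound on `A` and the
previous estimate; one more application of the mean value inequality to `g` gives the `(b - a)²`.
-/

open Set Real

section LinearEvolution

variable {E : Type*} [NormedAddCommGroup E] [NormedSpace ℝ E]
  {A : ℝ → E →L[ℝ] E} {u : ℝ → E} {a b M C : ℝ}

theorem norm_le_exp_mul_norm_of_hasDerivWithinAt_clm_apply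
    (hu : ∀ t ∈ Icc a b, HasDerivWithinAt u (A t (u t)) (Icc a b) t)
    (hA : ∀ t ∈ Icc a b, ‖A t‖ ≤ M) :
    ∀ t ∈ Icc a b, ‖u t‖ ≤ exp (M * (b - a)) * ‖u a‖ := by
  intro t ht
  have hM : 0 ≤ M := (norm_nonneg _).trans (hA a ⟨le_rfl, ht.1.trans ht.2⟩)
  have gronwall := norm_le_gronwallBound_of_norm_deriv_right_le (ε := 0)
    (fun t ht ↦ (hu t ht).continuousWithinAt)
    (fun t ht ↦ (hu t (Ico_subset_Icc_self ht)).mono_of_mem_nhdsWithin (Icc_mem_nhdsGE_of_mem ht))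
    le_rfl
    (fun t ht ↦ by
      rw [add_zero]
      exact (A t).le_of_opNorm_le (hA t (Ico_subset_Icc_self ht)) _)
    t ht
  rw [gronwallBound_ε0, mul_comm] at gronwall
  refine gronwall.trans (mul_le_mul_of_nonneg_right ?_ (norm_nonneg _))
  exact exp_le_exp.2 (mul_le_mul_of_nonneg_left (by linarith [ht.2]) hM)

theorem norm_sub_le_of_hasDerivWithinAt_clm_apply
    (hu : ∀ t ∈ Icc a b, HasDerivWithinAt u (A t (u t)) (Icc a b) t)
    (hA : ∀ t ∈ Icc a b, ‖A t‖ ≤ M) :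
    ∀ t ∈ Icc a b, ‖u t - u a‖ ≤ M * (exp (M * (b - a)) * ‖u a‖) * (t - a) := by
  refine norm_image_sub_le_of_norm_deriv_le_segment' hu fun t ht ↦ ?_
  have ht' := Ico_subset_Icc_self ht
  exact (A t).le_of_opNorm_le_of_le (hA t ht')
    (norm_le_exp_mul_norm_of_hasDerivWithinAt_clm_apply hu hA t ht')

theorem norm_apply_sub_apply_le_of_hasDerivWithinAt_clm_apply
    (hu : ∀ t ∈ Icc a b, HasDerivWithinAt u (A t (u t)) (Icc a b) t)
    (hA : ∀ t ∈ Icc a b, ‖A t‖ ≤ M) (hlip : ∀ t ∈ Icc a b, ‖A t - A a‖ ≤ C * (t - a)) :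
    ∀ t ∈ Icc a b,
      ‖A t (u t) - A a (u a)‖ ≤ (C + M ^ 2) * (t - a) * (exp (M * (b - a)) * ‖u a‖) := by
  intro t ht
  have ha : a ∈ Icc a b := ⟨le_rfl, ht.1.trans ht.2⟩
  have hsplit : A t (u t) - A a (u a) = (A t - A a) (u t) + A a (u t - u a) := by
    rw [sub_apply, map_sub]
    abel
  calc ‖A t (u t) - A a (u a)‖
      ≤ ‖(A t - A a) (u t)‖ + ‖A a (u t - u a)‖ := hsplit ▸ norm_add_le _ _
    _ ≤ C * (t - a) * (exp (M * (b - a)) * ‖u a‖)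
          + M * (M * (exp (M * (b - a)) * ‖u a‖) * (t - a)) :=
        add_le_add
          ((A t - A a).le_of_opNorm_le_of_le (hlip t ht)
            (norm_le_exp_mul_norm_of_hasDerivWithinAt_clm_apply hu hA t ht))
          ((A a).le_of_opNorm_le_of_le (hA a ha)
            (norm_sub_le_of_hasDerivWithinAt_clm_apply hu hA t ht))
    _ = (C + M ^ 2) * (t - a) * (exp (M * (b - a)) * ‖u a‖) := by ring

theorem norm_sub_sub_smul_le_of_hasDerivWithinAt_clm_apply (hab : a < b)
    (hu : ∀ t ∈ Icc a b, HasDerivWithinAt u (A t (u t)) (Icc a b) t)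
    (hA : ∀ t ∈ Icc a b, ‖A t‖ ≤ M) (hlip : ∀ t ∈ Icc a b, ‖A t - A a‖ ≤ C * (t - a)) :
    ‖u b - u a - (b - a) • A a (u a)‖ ≤ (C + M ^ 2) * exp (M * (b - a)) * (b - a) ^ 2 * ‖u a‖ := by
  have ha : a ∈ Icc a b := left_mem_Icc.2 hab.le
  have hb : b ∈ Icc a b := right_mem_Icc.2 hab.le
  have hM : 0 ≤ M := (norm_nonneg _).trans (hA a ha)
  have hC : 0 ≤ C := by nlinarith [(norm_nonneg _).trans (hlip b hb)]
  have hremainder : ∀ t ∈ Icc a b, HasDerivWithinAt (fun t ↦ u t - u a - (t - a) • A a (u a))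
      (A t (u t) - A a (u a)) (Icc a b) t := fun t ht ↦ by
    have h := ((hu t ht).sub_const (u a)).sub
      (((hasDerivWithinAt_id t _).sub_const a).smul_const (A a (u a)))
    rwa [one_smul] at h
  have hbound : ∀ t ∈ Ico a b,
      ‖A t (u t) - A a (u a)‖ ≤ (C + M ^ 2) * (b - a) * (exp (M * (b - a)) * ‖u a‖) :=
    fun t ht ↦ (norm_apply_sub_apply_le_of_hasDerivWithinAt_clm_apply hu hA hlip t
      (Ico_subset_Icc_self ht)).trans (by gcongr; exact ht.2.le)
  have hmvt := norm_image_sub_le_of_norm_deriv_le_segment' hremainder hbound b hb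
  simp only [sub_self, zero_smul, sub_zero] at hmvt
  exact hmvt.trans_eq (by ring)

end LinearEvolution

theorem short_time_first_order_expansion_general
    {E : Type*} [NormedAddCommGroup E] [NormedSpace ℝ E]
    (σ ε M C : ℝ) (hε : 0 < ε)
    (A : ℝ → (E →L[ℝ] E))
    (hbound : ∀ τ ∈ Set.Icc σ (σ + ε), ‖A τ‖ ≤ M)
    (hlip : ∀ τ ∈ Set.Icc σ (σ + ε), ‖A τ - A σ‖ ≤ C * (τ - σ))
    (u : ℝ → E)
    (hu : ∀ τ ∈ Set.Icc σ (σ + ε), HasDerivWithinAt u (A τ (u τ)) (Set.Icc σ (σ + ε)) τ) :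
    ‖u (σ + ε) - u σ - ε • A σ (u σ)‖ ≤
      (C + M ^ 2) * Real.exp (M * ε) * ε ^ 2 * ‖u σ‖ := by
  simpa using norm_sub_sub_smul_le_of_hasDerivWithinAt_clm_apply (lt_add_of_pos_right σ hε)
    hu hbound hlip

/-- Short-time first-order expansion of a non-autonomous linear evolution:
if `u′(τ) = A(τ) u(τ)` on `[σ, σ+ε]` with `‖A(τ)‖ ≤ M` and `‖A(τ) − A(σ)‖ ≤ C(τ−σ)`,
then `‖u(σ+ε) − u(σ) − ε A(σ) u(σ)‖ ≤ (C + M²) exp(Mε) ε² ‖u(σ)‖`. -/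
theorem short_time_first_order_expansion
    {E : Type*} [NormedAddCommGroup E] [NormedSpace ℝ E] [CompleteSpace E]
    (σ ε M C : ℝ) (hε : 0 < ε) (hM : 0 ≤ M) (hC : 0 ≤ C)
    (A : ℝ → (E →L[ℝ] E))
    (hcont : ContinuousOn A (Set.Icc σ (σ + ε)))
    (hbound : ∀ τ ∈ Set.Icc σ (σ + ε), ‖A τ‖ ≤ M)
    (hlip : ∀ τ ∈ Set.Icc σ (σ + ε), ‖A τ - A σ‖ ≤ C * (τ - σ))
    (u : ℝ → E)
    (hu : ∀ τ ∈ Set.Icc σ (σ + ε), HasDerivWithinAt u (A τ (u τ)) (Set.Icc σ (σ + ε)) τ) :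
    ‖u (σ + ε) - u σ - ε • A σ (u σ)‖ ≤
      (C + M ^ 2) * Real.exp (M * ε) * ε ^ 2 * ‖u σ‖ :=
  short_time_first_order_expansion_general σ ε M C hε A hbound hlip u hu
end

section
/- Let E be a real Banach space, t > 0, ℓ ≥ 1 an integer, and ε = t/ℓ, with partition points τ_i = i·ε for i = 0,…,ℓ. Let A : ℝ → (E →L E) be continuous in operator norm on [0, t] with ‖A(τ)‖ ≤ M for all τ ∈ [0, t] and ‖A(τ) − A(σ)‖ ≤ C |τ − σ| for all τ, σ ∈ [0, t], where M, C ≥ 0. Let u : ℝ → E be differentiable on [0, t] with u′(τ) = A(τ)(u(τ)) for all τ ∈ [0, t]. Define w_0 = u(0) and w_i = w_{i−1} + ε · A(τ_i)(w_{i−1}) for i = 1,…,ℓ, so that w_ℓ = (I + εA(τ_ℓ))(I + εA(τ_{ℓ−1}))⋯(I + εA(τ_1)) u(0). Then ‖u(t) − w_ℓ‖ ≤ (2C + M²) · t · exp(3 M t) · ε · ‖u(0)‖. (This is the first-order product approximation: the evolution over [0, t] equals the ordered product of the factors I + ε A(τ_i) up to an error of order ε.) -/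
/-!
On `[0, t]` Grönwall bounds the solution by `B = ‖u 0‖ exp (M t)`. Comparing `u` on one step
`[a, a + ε]` with the frozen-coefficient Euler step `u a + ε A(a + ε) (u a)`, the derivative of the
difference is `A(τ) u(τ) - A(a + ε) u(a)`, of size at most `(C + M²) B ε` by the Lipschitz bound on
`A` and the Lipschitz bound `M B` on `u`; so each step makes a local error `(C + M²) B ε²`. The
factors `I + ε A(τ_i)` have norm at most `1 + ε M`, so the local errors propagate with at most a
factor `(1 + ε M)^ℓ ≤ exp (M t)`, and the `ℓ = t / ε` of them add up to
`(C + M²) t exp (2 M t) ε ‖u 0‖`.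
-/

open Set

section LinearEvolution

variable {E : Type*} [NormedAddCommGroup E] [NormedSpace ℝ E]
  {A : ℝ → E →L[ℝ] E} {u : ℝ → E} {a b M B C : ℝ}

theorem norm_le_mul_exp_of_hasDerivWithinAt_clm
    (hu : ∀ τ ∈ Icc a b, HasDerivWithinAt u (A τ (u τ)) (Icc a b) τ)
    (hA : ∀ τ ∈ Icc a b, ‖A τ‖ ≤ M) :
    ∀ τ ∈ Icc a b, ‖u τ‖ ≤ ‖u a‖ * Real.exp (M * (τ - a)) := by
  intro τ hτ
  have h := norm_le_gronwallBound_of_norm_deriv_right_le (f' := fun τ => A τ (u τ)) (ε := 0)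
    (fun τ hτ => (hu τ hτ).continuousWithinAt)
    (fun τ hτ => (hu τ (Ico_subset_Icc_self hτ)).mono_of_mem_nhdsWithin
      (Icc_mem_nhdsGE_of_mem hτ))
    le_rfl
    (fun τ hτ => by
      simpa using (A τ).le_of_opNorm_le (hA τ (Ico_subset_Icc_self hτ)) (u τ))
    τ hτ
  rwa [gronwallBound_ε0] at h

theorem norm_sub_le_of_hasDerivWithinAt_clm
    (hu : ∀ τ ∈ Icc a b, HasDerivWithinAt u (A τ (u τ)) (Icc a b) τ)
    (hA : ∀ τ ∈ Icc a b, ‖A τ‖ ≤ M) (hB : ∀ τ ∈ Icc a b, ‖u τ‖ ≤ B) :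
    ∀ τ ∈ Icc a b, ‖u τ - u a‖ ≤ M * B * (τ - a) :=
  norm_image_sub_le_of_norm_deriv_le_segment' hu fun τ hτ =>
    (A τ).le_of_opNorm_le_of_le (hA τ (Ico_subset_Icc_self hτ)) (hB τ (Ico_subset_Icc_self hτ))

theorem norm_euler_local_error_le (hab : a ≤ b) (hC : 0 ≤ C)
    (hu : ∀ τ ∈ Icc a b, HasDerivWithinAt u (A τ (u τ)) (Icc a b) τ)
    (hA : ∀ τ ∈ Icc a b, ‖A τ‖ ≤ M) (hlip : ∀ τ ∈ Icc a b, ‖A τ - A b‖ ≤ C * (b - τ))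
    (hB : ∀ τ ∈ Icc a b, ‖u τ‖ ≤ B) :
    ‖u b - u a - (b - a) • A b (u a)‖ ≤ (C + M ^ 2) * B * (b - a) ^ 2 := by
  have hb : b ∈ Icc a b := right_mem_Icc.2 hab
  have hM : 0 ≤ M := (norm_nonneg _).trans (hA b hb)
  have hB0 : 0 ≤ B := (norm_nonneg _).trans (hB a (left_mem_Icc.2 hab))
  have hderiv : ∀ τ ∈ Icc a b, HasDerivWithinAt (fun s => u s - (s - a) • A b (u a))
      (A τ (u τ) - A b (u a)) (Icc a b) τ := fun τ hτ => by
    have h := (hu τ hτ).sub (((hasDerivWithinAt_id τ _).sub_const a).smul_const (A b (u a)))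
    rwa [one_smul] at h
  have hbound : ∀ τ ∈ Ico a b, ‖A τ (u τ) - A b (u a)‖ ≤ (C + M ^ 2) * B * (b - a) := by
    intro τ hτ
    have hτ' := Ico_subset_Icc_self hτ
    have hsplit : A τ (u τ) - A b (u a) = (A τ - A b) (u τ) + A b (u τ - u a) := by
      simp only [FunLike.coe_sub, Pi.sub_apply, map_sub]; abel
    have hcoef : ‖(A τ - A b) (u τ)‖ ≤ C * (b - a) * B :=
      (A τ - A b).le_of_opNorm_le_of_le
        ((hlip τ hτ').trans (by nlinarith [hτ.1])) (hB τ hτ')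
    have hincr : ‖A b (u τ - u a)‖ ≤ M * (M * B * (b - a)) :=
      (A b).le_of_opNorm_le_of_le (hA b hb)
        ((norm_sub_le_of_hasDerivWithinAt_clm hu hA hB τ hτ').trans
          (by have := mul_nonneg hM hB0; nlinarith [hτ.2]))
    rw [hsplit]
    calc _ ≤ C * (b - a) * B + M * (M * B * (b - a)) :=
          (norm_add_le _ _).trans (add_le_add hcoef hincr)
      _ = (C + M ^ 2) * B * (b - a) := by ring
  have h := norm_image_sub_le_of_norm_deriv_le_segment' hderiv hbound b hb
  calc _ = ‖(u b - (b - a) • A b (u a)) - (u a - (a - a) • A b (u a))‖ := by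
        congr 1; simp only [sub_self, zero_smul, sub_zero]; abel
    _ ≤ _ := h
    _ = _ := by ring

theorem norm_euler_local_error_le_of_Icc_subset {c d : ℝ} (hca : c ≤ a) (hab : a ≤ b)
    (hbd : b ≤ d) (hC : 0 ≤ C)
    (hu : ∀ τ ∈ Icc c d, HasDerivWithinAt u (A τ (u τ)) (Icc c d) τ)
    (hA : ∀ τ ∈ Icc c d, ‖A τ‖ ≤ M)
    (hlip : ∀ τ ∈ Icc c d, ∀ s ∈ Icc c d, ‖A τ - A s‖ ≤ C * |τ - s|)
    (hB : ∀ τ ∈ Icc c d, ‖u τ‖ ≤ B) :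
    ‖u b - u a - (b - a) • A b (u a)‖ ≤ (C + M ^ 2) * B * (b - a) ^ 2 := by
  have hsub : Icc a b ⊆ Icc c d := Icc_subset_Icc hca hbd
  refine norm_euler_local_error_le hab hC (fun τ hτ => (hu τ (hsub hτ)).mono hsub)
    (fun τ hτ => hA τ (hsub hτ)) (fun τ hτ => ?_) (fun τ hτ => hB τ (hsub hτ))
  rw [← abs_of_nonneg (sub_nonneg.2 hτ.2), abs_sub_comm]
  exact hlip τ (hsub hτ) b (hsub (right_mem_Icc.2 hab))

theorem norm_sub_euler_step_le {L : E →L[ℝ] E} {x y v : E} {h M δ : ℝ} (hh : 0 ≤ h) (hL : ‖L‖ ≤ M)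
    (hloc : ‖y - x - h • L x‖ ≤ δ) :
    ‖y - (v + h • L v)‖ ≤ (1 + h * M) * ‖x - v‖ + δ := by
  have hsplit : y - (v + h • L v) = (y - x - h • L x) + ((x - v) + h • L (x - v)) := by
    rw [map_sub, smul_sub]; abel
  have hprop : ‖h • L (x - v)‖ ≤ h * M * ‖x - v‖ := by
    rw [norm_smul, Real.norm_of_nonneg hh, mul_assoc]
    exact mul_le_mul_of_nonneg_left (L.le_of_opNorm_le hL _) hh
  rw [hsplit]
  calc _ ≤ δ + (‖x - v‖ + h * M * ‖x - v‖) :=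
        (norm_add_le _ _).trans (add_le_add hloc ((norm_add_le _ _).trans (by linarith)))
    _ = _ := by ring

end LinearEvolution

theorem le_mul_mul_pow_of_le_mul_add {e : ℕ → ℝ} {q D : ℝ} {n : ℕ} (hq : 1 ≤ q) (hD : 0 ≤ D)
    (h0 : e 0 = 0) (hstep : ∀ i < n, e (i + 1) ≤ q * e i + D) :
    e n ≤ n * D * q ^ n := by
  induction n with
  | zero => simp [h0]
  | succ n ih =>
    have ih := ih fun i hi => hstep i (Nat.lt_succ_of_lt hi)
    have hDq : D ≤ D * q ^ (n + 1) := le_mul_of_one_le_right hD (one_le_pow₀ hq)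
    calc e (n + 1) ≤ q * (n * D * q ^ n) + D :=
          (hstep n n.lt_succ_self).trans (by gcongr)
      _ ≤ (n + 1 : ℕ) * D * q ^ (n + 1) := by push_cast; rw [pow_succ] at hDq ⊢; nlinarith

theorem one_add_pow_le_exp_nat_mul {x : ℝ} (hx : -1 ≤ x) (n : ℕ) :
    (1 + x) ^ n ≤ Real.exp (n * x) := by
  rw [Real.exp_nat_mul]
  exact pow_le_pow_left₀ (by linarith) (by linarith [Real.add_one_le_exp x]) n

theorem first_order_product_approximation_general
    {E : Type*} [NormedAddCommGroup E] [NormedSpace ℝ E]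
    (t : ℝ) (ht : 0 < t) (ℓ : ℕ) (hℓ : 1 ≤ ℓ) (ε : ℝ) (hε : ε = t / ℓ)
    (M C : ℝ) (hM : 0 ≤ M) (hC : 0 ≤ C)
    (A : ℝ → (E →L[ℝ] E))
    (hbound : ∀ τ ∈ Set.Icc (0 : ℝ) t, ‖A τ‖ ≤ M)
    (hlip : ∀ τ ∈ Set.Icc (0 : ℝ) t, ∀ s ∈ Set.Icc (0 : ℝ) t, ‖A τ - A s‖ ≤ C * |τ - s|)
    (u : ℝ → E)
    (hu : ∀ τ ∈ Set.Icc (0 : ℝ) t, HasDerivWithinAt u (A τ (u τ)) (Set.Icc 0 t) τ)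
    (w : ℕ → E)
    (hw0 : w 0 = u 0)
    (hwi : ∀ i : ℕ, 1 ≤ i → i ≤ ℓ → w i = w (i - 1) + ε • A ((i : ℝ) * ε) (w (i - 1))) :
    ‖u t - w ℓ‖ ≤ (2 * C + M ^ 2) * t * Real.exp (3 * M * t) * ε * ‖u 0‖ := by
  have hε0 : 0 < ε := hε ▸ div_pos ht (by exact_mod_cast hℓ)
  have hℓε : ℓ * ε = t := by rw [hε]; field_simp
  set B := ‖u 0‖ * Real.exp (M * t) with hBdef
  have hB : ∀ τ ∈ Icc 0 t, ‖u τ‖ ≤ B := fun τ hτ =>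
    (norm_le_mul_exp_of_hasDerivWithinAt_clm hu hbound τ hτ).trans
      (by rw [hBdef, sub_zero]; gcongr; exact hτ.2)
  have hstep : ∀ i < ℓ, ‖u ((i + 1 : ℕ) * ε) - w (i + 1)‖ ≤
      (1 + ε * M) * ‖u (i * ε) - w i‖ + (C + M ^ 2) * B * ε ^ 2 := by
    intro i hi
    have hlen : ((i + 1 : ℕ) * ε) - i * ε = ε := by push_cast; ring
    have hnext : (i + 1 : ℕ) * ε ≤ t := by rw [← hℓε]; gcongr; exact_mod_cast hi
    have hloc := norm_euler_local_error_le_of_Icc_subset (a := i * ε) (by positivity) (by linarith) hnext hC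
      hu hbound hlip hB
    rw [hlen] at hloc
    rw [hwi (i + 1) (by omega) hi, Nat.add_sub_cancel]
    exact norm_sub_euler_step_le hε0.le (hbound _ ⟨by positivity, hnext⟩) hloc
  have herr := le_mul_mul_pow_of_le_mul_add (e := fun i : ℕ => ‖u (i * ε) - w i‖)
    (by nlinarith) (by positivity) (by simp [hw0]) hstep
  rw [hℓε] at herr
  calc ‖u t - w ℓ‖ ≤ ℓ * ((C + M ^ 2) * B * ε ^ 2) * (1 + ε * M) ^ ℓ := herr
    _ ≤ ℓ * ((C + M ^ 2) * B * ε ^ 2) * Real.exp (M * t) := by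
        gcongr
        rw [← hℓε, mul_comm M, mul_assoc]
        exact one_add_pow_le_exp_nat_mul (by nlinarith) ℓ
    _ = (C + M ^ 2) * t * Real.exp (M * t + M * t) * ε * ‖u 0‖ := by
        rw [Real.exp_add, hBdef, ← hℓε]; ring
    _ ≤ (2 * C + M ^ 2) * t * Real.exp (3 * M * t) * ε * ‖u 0‖ := by
        gcongr
        · linarith
        · nlinarith [mul_nonneg hM ht.le]

/-- First-order product approximation of a non-autonomous linear evolution:
if `u′(τ) = A(τ) u(τ)` on `[0, t]`, `ε = t/ℓ`, `τ_i = i·ε`, and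
`w_ℓ = (I + εA(τ_ℓ)) ⋯ (I + εA(τ_1)) u(0)` (built by the recursion
`w_i = w_{i−1} + ε A(τ_i) w_{i−1}`), then
`‖u(t) − w_ℓ‖ ≤ (2C + M²) t exp(3Mt) ε ‖u(0)‖`. -/
theorem first_order_product_approximation
    {E : Type*} [NormedAddCommGroup E] [NormedSpace ℝ E] [CompleteSpace E]
    (t : ℝ) (ht : 0 < t) (ℓ : ℕ) (hℓ : 1 ≤ ℓ) (ε : ℝ) (hε : ε = t / ℓ)
    (M C : ℝ) (hM : 0 ≤ M) (hC : 0 ≤ C)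
    (A : ℝ → (E →L[ℝ] E))
    (hcont : ContinuousOn A (Set.Icc 0 t))
    (hbound : ∀ τ ∈ Set.Icc (0 : ℝ) t, ‖A τ‖ ≤ M)
    (hlip : ∀ τ ∈ Set.Icc (0 : ℝ) t, ∀ s ∈ Set.Icc (0 : ℝ) t, ‖A τ - A s‖ ≤ C * |τ - s|)
    (u : ℝ → E)
    (hu : ∀ τ ∈ Set.Icc (0 : ℝ) t, HasDerivWithinAt u (A τ (u τ)) (Set.Icc 0 t) τ)
    (w : ℕ → E)
    (hw0 : w 0 = u 0)
    (hwi : ∀ i : ℕ, 1 ≤ i → i ≤ ℓ → w i = w (i - 1) + ε • A ((i : ℝ) * ε) (w (i - 1))) :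
    ‖u t - w ℓ‖ ≤ (2 * C + M ^ 2) * t * Real.exp (3 * M * t) * ε * ‖u 0‖ :=
  first_order_product_approximation_general t ht ℓ hℓ ε hε M C hM hC A hbound hlip u hu w hw0 hwi
end
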